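/- arXiv:2407.10922 — 2 statements merged into one kernel-verified Lean document; each statement's English description precedes it below -/
import Mathlib

section
/- Let k ∈ ℤ and μ ∈ (−1/2, 1/2). Suppose v : ℝ → ℂ is differentiable, satisfies v′(s) = (k − (1/2)·tanh s)·v(s) for all s ∈ ℝ, is not identically zero, and ∫_ℝ |v(s)|²·(cosh s)^(−2μ) ds < ∞. Then k = 0. -/
/-! The equation integrates explicitly: `v s = v 0 · e^{ks} / √(cosh s)`, so the weighted integrand is
`‖v 0‖² · exp (2ks − (1 + 2μ) log cosh s)`. Since `0 ≤ log cosh s ≤ |s|` and `1 + 2μ < 2`, for `k ≠ 0` the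
exponent is nonnegative on the half-line where `|s| ≤ ks`, so the integrand stays above `‖v 0‖² > 0` on a set of
infinite measure. -/

open MeasureTheory

namespace Real

lemma cosh_le_exp_abs (x : ℝ) : cosh x ≤ exp |x| := by
  rw [← cosh_abs, cosh_eq]
  linarith [exp_le_exp.2 (neg_le_self (abs_nonneg x))]

lemma log_cosh_le_abs (x : ℝ) : log (cosh x) ≤ |x| :=
  (log_le_iff_le_exp (cosh_pos x)).2 (cosh_le_exp_abs x)

lemma log_cosh_nonneg (x : ℝ) : 0 ≤ log (cosh x) :=
  log_nonneg (one_le_cosh x)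

lemma hasDerivAt_log_cosh (x : ℝ) : HasDerivAt (fun x => log (cosh x)) (tanh x) x := by
  simpa [tanh_eq_sinh_div_cosh] using (hasDerivAt_cosh x).log (cosh_pos x).ne'

end Real

lemma eq_exp_mul_of_deriv_eq_mul {a A v : ℝ → ℂ} (hA : ∀ s, HasDerivAt A (a s) s)
    (hv : Differentiable ℝ v) (hode : ∀ s, deriv v s = a s * v s) (s : ℝ) :
    v s = Complex.exp (A s - A 0) * v 0 := by
  have hw : ∀ t, HasDerivAt (fun t => Complex.exp (-A t) * v t) 0 t := fun t => by
    have := ((hA t).fun_neg.cexp).fun_mul (hv t).hasDerivAt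
    rw [hode t] at this
    exact this.congr_deriv (by ring)
  have hconst := is_const_of_deriv_eq_zero (fun t => (hw t).differentiableAt)
    (fun t => (hw t).deriv) s 0
  calc v s = Complex.exp (A s) * (Complex.exp (-A s) * v s) := by
        rw [← mul_assoc, ← Complex.exp_add, add_neg_cancel, Complex.exp_zero, one_mul]
    _ = Complex.exp (A s - A 0) * v 0 := by
        rw [hconst, ← mul_assoc, ← Complex.exp_add, sub_eq_add_neg]

lemma not_integrable_of_le_on {α : Type*} [MeasurableSpace α] {μ : Measure α} {f : α → ℝ}
    {S : Set α} (hS : μ S = ⊤) {c : ℝ} (hc : 0 < c) (hf : ∀ x ∈ S, c ≤ f x) :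
    ¬ Integrable f μ := fun hint => by
  refine (hint.measure_norm_ge_lt_top hc).ne (top_unique ?_)
  exact hS ▸ measure_mono fun x hx => (hf x hx).trans (Real.le_norm_self _)

lemma exists_volume_eq_top_abs_le_mul (k : ℤ) (hk : k ≠ 0) :
    ∃ S : Set ℝ, volume S = ⊤ ∧ ∀ s ∈ S, |s| ≤ k * s := by
  rcases hk.lt_or_gt with hk | hk
  · refine ⟨Set.Iic 0, Real.volume_Iic, fun s (hs : s ≤ 0) => ?_⟩
    have : (k : ℝ) ≤ -1 := by exact_mod_cast Int.le_sub_one_of_lt hk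
    rw [abs_of_nonpos hs]; nlinarith
  · refine ⟨Set.Ici 0, Real.volume_Ici, fun s (hs : 0 ≤ s) => ?_⟩
    have : (1 : ℝ) ≤ k := by exact_mod_cast hk
    rw [abs_of_nonneg hs]; nlinarith

lemma norm_eq_of_deriv_eq_sub_tanh_mul {k : ℝ} {v : ℝ → ℂ} (hv : Differentiable ℝ v)
    (hode : ∀ s, deriv v s = ((k - Real.tanh s / 2 : ℝ) : ℂ) * v s) (s : ℝ) :
    ‖v s‖ = Real.exp (k * s - Real.log (Real.cosh s) / 2) * ‖v 0‖ := by
  have hA : ∀ s, HasDerivAt (fun s => ((k * s - Real.log (Real.cosh s) / 2 : ℝ) : ℂ))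
      ((k - Real.tanh s / 2 : ℝ) : ℂ) s := fun s => by
    simpa using (((hasDerivAt_id s).const_mul k).sub
      ((Real.hasDerivAt_log_cosh s).div_const 2)).ofReal_comp
  rw [eq_exp_mul_of_deriv_eq_mul hA hv hode s, norm_mul, Complex.norm_exp]
  simp

/-- Let `k ∈ ℤ` and `μ ∈ (−1/2, 1/2)`. If `v : ℝ → ℂ` is differentiable, satisfies
`v′(s) = (k − (1/2)·tanh s)·v(s)`, is not identically zero, and
`∫ |v(s)|²·(cosh s)^(−2μ) ds < ∞`, then `k = 0`. -/
theorem stmt3 (k : ℤ) (μ : ℝ) (hμ : μ ∈ Set.Ioo (-(1/2) : ℝ) (1/2))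
    (v : ℝ → ℂ) (hv : Differentiable ℝ v)
    (hode : ∀ s : ℝ, deriv v s = (((k : ℝ) - Real.tanh s / 2 : ℝ) : ℂ) * v s)
    (hne : v ≠ 0)
    (hint : Integrable (fun s : ℝ => ‖v s‖ ^ 2 * Real.cosh s ^ (-(2 * μ)))) :
    k = 0 := by
  have hnorm := norm_eq_of_deriv_eq_sub_tanh_mul hv hode
  have hv0 : v 0 ≠ 0 := fun h0 => hne <| funext fun s => by simpa [h0] using hnorm s
  have hweight : ∀ s, ‖v s‖ ^ 2 * Real.cosh s ^ (-(2 * μ)) =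
      ‖v 0‖ ^ 2 * Real.exp (2 * k * s - (1 + 2 * μ) * Real.log (Real.cosh s)) := fun s => by
    rw [hnorm, Real.rpow_def_of_pos (Real.cosh_pos s), mul_pow, ← Real.exp_nat_mul,
      mul_right_comm, ← Real.exp_add]
    ring_nf
  by_contra hk
  obtain ⟨S, hS, hkS⟩ := exists_volume_eq_top_abs_le_mul k hk
  refine not_integrable_of_le_on hS (pow_pos (norm_pos_iff.2 hv0) 2) (fun s hs => ?_) hint
  rw [hweight]
  refine le_mul_of_one_le_right (by positivity) (Real.one_le_exp ?_)
  nlinarith [hkS s hs, Real.log_cosh_le_abs s, Real.log_cosh_nonneg s, hμ.2]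
end

section
/- Let a₀, a_t, a_x, a_y : ℝ³ → ℝ be differentiable functions of the coordinates (t, x, y). Define b₀ = ∂_t a_t + ∂_x a_x + ∂_y a_y, b_t = −∂_t a₀ + ∂_x a_y − ∂_y a_x, b_x = −∂_x a₀ + ∂_y a_t − ∂_t a_y, and b_y = −∂_y a₀ + ∂_t a_x − ∂_x a_t. Define ψ₁ := −a_y + i·a_x and ψ₂ := −a_t − i·a₀ (functions ℝ³ → ℂ). Then pointwise on ℝ³: −b_y + i·b_x = i·∂_t ψ₁ − (∂_x + i·∂_y)(conj ψ₂) and −b_t − i·b₀ = i·∂_t ψ₂ + (∂_x + i·∂_y)(conj ψ₁). -/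
/-!
Taking a partial derivative commutes with complex conjugation (a real-linear isometry) and, for
differentiable real functions `u`, `v`, with forming `u + i v`. Both identities thereby become
polynomial identities in `i` and the partials `∂ⱼaₖ`, which hold once `i² = -1` is used.
-/

/-- Partial derivative in the `t`-direction of a function of `(t, x, y) ∈ ℝ³`. -/
noncomputable def pdT {E : Type*} [NormedAddCommGroup E] [NormedSpace ℝ E]
    (f : ℝ × ℝ × ℝ → E) (p : ℝ × ℝ × ℝ) : E :=
  fderiv ℝ f p (1, 0, 0)

/-- Partial derivative in the `x`-direction of a function of `(t, x, y) ∈ ℝ³`. -/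
noncomputable def pdX {E : Type*} [NormedAddCommGroup E] [NormedSpace ℝ E]
    (f : ℝ × ℝ × ℝ → E) (p : ℝ × ℝ × ℝ) : E :=
  fderiv ℝ f p (0, 1, 0)

/-- Partial derivative in the `y`-direction of a function of `(t, x, y) ∈ ℝ³`. -/
noncomputable def pdY {E : Type*} [NormedAddCommGroup E] [NormedSpace ℝ E]
    (f : ℝ × ℝ × ℝ → E) (p : ℝ × ℝ × ℝ) : E :=
  fderiv ℝ f p (0, 0, 1)

open Complex ComplexConjugate

theorem fderiv_conj_apply {E : Type*} [NormedAddCommGroup E] [NormedSpace ℝ E]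
    (f : E → ℂ) (p w : E) :
    fderiv ℝ (fun q => conj (f q)) p w = conj (fderiv ℝ f p w) :=
  congrArg (· w) (conjCLE.comp_fderiv (f := f) (x := p))

theorem fderiv_ofReal_add_I_mul_apply {E : Type*} [NormedAddCommGroup E] [NormedSpace ℝ E]
    {u v : E → ℝ} {p : E} (hu : DifferentiableAt ℝ u p) (hv : DifferentiableAt ℝ v p) (w : E) :
    fderiv ℝ (fun q => (u q : ℂ) + I * v q) p w = fderiv ℝ u p w + I * fderiv ℝ v p w := by
  have hU : HasFDerivAt (fun q => (u q : ℂ)) (ofRealCLM.comp (fderiv ℝ u p)) p :=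
    ofRealCLM.hasFDerivAt.comp p hu.hasFDerivAt
  have hV : HasFDerivAt (fun q => (v q : ℂ)) (ofRealCLM.comp (fderiv ℝ v p)) p :=
    ofRealCLM.hasFDerivAt.comp p hv.hasFDerivAt
  rw [(hU.fun_add (hV.const_mul I)).fderiv]
  simp

/-- The flat-space coordinate form of the intertwining between the Hodge–de Rham
operator on `Ω⁰ ⊕ Ω¹` over `ℝ³` and a Dirac-type operator: with
`b₀ = ∂ₜaₜ + ∂ₓaₓ + ∂ᵧaᵧ`, `bₜ = −∂ₜa₀ + ∂ₓaᵧ − ∂ᵧaₓ`, `bₓ = −∂ₓa₀ + ∂ᵧaₜ − ∂ₜaᵧ`,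
`bᵧ = −∂ᵧa₀ + ∂ₜaₓ − ∂ₓaₜ`, `ψ₁ = −aᵧ + i·aₓ`, `ψ₂ = −aₜ − i·a₀`, one has
`−bᵧ + i·bₓ = i·∂ₜψ₁ − (∂ₓ + i∂ᵧ)(conj ψ₂)` and
`−bₜ − i·b₀ = i·∂ₜψ₂ + (∂ₓ + i∂ᵧ)(conj ψ₁)` pointwise. -/
theorem stmt10 (a₀ aT aX aY : ℝ × ℝ × ℝ → ℝ)
    (h₀ : Differentiable ℝ a₀) (hT : Differentiable ℝ aT)
    (hX : Differentiable ℝ aX) (hY : Differentiable ℝ aY)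
    (b₀ bT bX bY : ℝ × ℝ × ℝ → ℝ) (ψ₁ ψ₂ : ℝ × ℝ × ℝ → ℂ)
    (hb₀ : b₀ = fun p => pdT aT p + pdX aX p + pdY aY p)
    (hbT : bT = fun p => -pdT a₀ p + pdX aY p - pdY aX p)
    (hbX : bX = fun p => -pdX a₀ p + pdY aT p - pdT aY p)
    (hbY : bY = fun p => -pdY a₀ p + pdT aX p - pdX aT p)
    (hψ₁ : ψ₁ = fun p => (-(aY p) : ℂ) + Complex.I * (aX p : ℂ))
    (hψ₂ : ψ₂ = fun p => (-(aT p) : ℂ) - Complex.I * (a₀ p : ℂ)) :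
    ∀ p : ℝ × ℝ × ℝ,
      (((-(bY p) : ℝ) : ℂ) + Complex.I * (bX p : ℂ)
          = Complex.I * pdT ψ₁ p -
              (pdX (fun q => (starRingEnd ℂ) (ψ₂ q)) p +
                Complex.I * pdY (fun q => (starRingEnd ℂ) (ψ₂ q)) p)) ∧
      (((-(bT p) : ℝ) : ℂ) - Complex.I * (b₀ p : ℂ)
          = Complex.I * pdT ψ₂ p +
              (pdX (fun q => (starRingEnd ℂ) (ψ₁ q)) p +
                Complex.I * pdY (fun q => (starRingEnd ℂ) (ψ₁ q)) p)) := by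
  intro p
  have hψ₁p (w) : fderiv ℝ ψ₁ p w = -fderiv ℝ aY p w + I * fderiv ℝ aX p w := by
    have hψ₁_eq : ψ₁ = fun q => ((-aY q : ℝ) : ℂ) + I * aX q := by
      subst hψ₁; funext q; push_cast; rfl
    rw [hψ₁_eq, fderiv_ofReal_add_I_mul_apply (hY p).fun_neg (hX p), fderiv_fun_neg]
    simp only [neg_apply, ofReal_neg]
  have hψ₂p (w) : fderiv ℝ ψ₂ p w = -fderiv ℝ aT p w - I * fderiv ℝ a₀ p w := by
    have hψ₂_eq : ψ₂ = fun q => ((-aT q : ℝ) : ℂ) + I * ((-a₀ q : ℝ) : ℂ) := by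
      subst hψ₂; funext q; push_cast; ring
    rw [hψ₂_eq, fderiv_ofReal_add_I_mul_apply (hT p).fun_neg (h₀ p).fun_neg, fderiv_fun_neg,
      fderiv_fun_neg]
    simp only [neg_apply, ofReal_neg]
    ring
  simp only [pdT, pdX, pdY, fderiv_conj_apply, hψ₁p, hψ₂p, hb₀, hbT, hbX, hbY]
  constructor <;>
  · simp only [map_add, map_sub, map_neg, map_mul, conj_ofReal, conj_I, ofReal_add, ofReal_sub,
      ofReal_neg]
    ring_nf
    simp only [I_sq]
    ring
end
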